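/- arXiv:1701.07779 — 2 statements merged into one kernel-verified Lean document; each statement's English description precedes it below -/
import Mathlib

section
/- If f(z) = z + a_2 z² + a_3 z³ + ⋯ is in BS(α), 0 ≤ α < 1, i.e., z f'(z)/f(z) - 1 ≺ z/(1-α z²), then for every complex μ, |a_3 - μ a_2²| ≤ (1/2) max{1, |2μ - 1|}. -/
/-!
Writing `z f'/f - 1 = w/(1 - α w²)` as `(z f' - f)(1 - α w²) = f w` and comparing Taylor
coefficients at `0` gives `a₂ = c₁` and `a₃ = (c₂ + c₁²)/2`, where `w = c₁ z + c₂ z² + ⋯`;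
the factor `1 - α w²` equals `1 + O(z²)` and so does not contribute. Hence
`a₃ - μ a₂² = (c₂ - (2μ - 1) c₁²)/2`, and the Schwarz–Pick inequality applied to `w(z)/z`
gives `|c₂| ≤ 1 - |c₁|²`, so that `|c₂ - ν c₁²| ≤ (1 - |c₁|²) + |ν| |c₁|² ≤ max 1 |ν|`
for `ν = 2μ - 1`.
-/

open Complex Metric Filter Topology ComplexConjugate Set

section IteratedDeriv

variable {𝕜 : Type*} [NontriviallyNormedField 𝕜]

lemma iteratedDeriv_succ_id_mul_zero {g : 𝕜 → 𝕜} {n : ℕ} (hg : ContDiffAt 𝕜 (n + 1 : ℕ) g 0) :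
    iteratedDeriv (n + 1) (fun z => z * g z) 0 = (n + 1) * iteratedDeriv n g 0 := by
  rw [iteratedDeriv_fun_mul (f := fun z => z) contDiffAt_id hg, Finset.sum_eq_single 1]
  · simp [iteratedDeriv_fun_id_zero]
  · intro i _ hi
    simp [iteratedDeriv_fun_id_zero, hi]
  · simp

lemma iteratedDeriv_succ_id_mul_deriv_sub_zero {f : 𝕜 → 𝕜} {n : ℕ}
    (hf : ContDiffAt 𝕜 (n + 2 : ℕ) f 0) :
    iteratedDeriv (n + 1) (fun z => z * deriv f z - f z) 0 = n * iteratedDeriv (n + 1) f 0 := by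
  have hf' : ContDiffAt 𝕜 (n + 1 : ℕ) (deriv f) 0 := hf.derivWithin (by norm_cast)
  rw [iteratedDeriv_fun_sub (f := fun z => z * deriv f z) (contDiffAt_id.mul hf')
      (hf.of_le (by norm_cast; omega)),
    iteratedDeriv_succ_id_mul_zero hf', ← iteratedDeriv_succ']
  ring

end IteratedDeriv

lemma iteratedDeriv_two_three_zero_of_eventuallyEq {f w g : ℂ → ℂ} (hf : AnalyticAt ℂ f 0)
    (hw : AnalyticAt ℂ w 0) (hg : AnalyticAt ℂ g 0) (hf0 : f 0 = 0) (hf'0 : deriv f 0 = 1)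
    (hw0 : w 0 = 0) (hg0 : g 0 = 1) (hg'0 : deriv g 0 = 0)
    (heq : (fun z => (z * deriv f z - f z) * g z) =ᶠ[𝓝 0] fun z => f z * w z) :
    iteratedDeriv 2 f 0 / 2 = deriv w 0 ∧
      iteratedDeriv 3 f 0 / 6 = (iteratedDeriv 2 w 0 / 2 + deriv w 0 ^ 2) / 2 := by
  have hzf : AnalyticAt ℂ (fun z => z * deriv f z - f z) 0 := by fun_prop
  have hzf1 := iteratedDeriv_succ_id_mul_deriv_sub_zero (n := 0) hf.contDiffAt
  have hzf2 := iteratedDeriv_succ_id_mul_deriv_sub_zero (n := 1) hf.contDiffAt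
  have hzf3 := iteratedDeriv_succ_id_mul_deriv_sub_zero (n := 2) hf.contDiffAt
  have hleibniz (n : ℕ) := heq.iteratedDeriv_eq n
  simp only [iteratedDeriv_fun_mul hzf.contDiffAt hg.contDiffAt,
    iteratedDeriv_fun_mul hf.contDiffAt hw.contDiffAt] at hleibniz
  have h2 : iteratedDeriv 2 f 0 = 2 * deriv w 0 := by
    simpa [Finset.sum_range_succ, hzf1, hzf2, hg0, hg'0, hf0, hf'0, hw0] using hleibniz 2
  have h3 : 2 * iteratedDeriv 3 f 0 =
      3 * iteratedDeriv 2 w 0 + 3 * iteratedDeriv 2 f 0 * deriv w 0 := by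
    simpa [Finset.sum_range_succ, hzf1, hzf2, hzf3, hg0, hg'0, hf0, hf'0, hw0] using hleibniz 3
  constructor
  · linear_combination h2 / 2
  · linear_combination h3 / 12 + deriv w 0 / 4 * h2

lemma eventuallyEq_cross_mul_of_eq_div {f w : ℂ → ℂ} {α : ℂ} (hf : HasDerivAt f 1 0)
    (hf0 : f 0 = 0) (hw : ContinuousAt w 0) (hw0 : w 0 = 0)
    (h : ∀ᶠ z in 𝓝[≠] 0, z * deriv f z / f z - 1 = w z / (1 - α * w z ^ 2)) :
    (fun z => (z * deriv f z - f z) * (1 - α * w z ^ 2)) =ᶠ[𝓝 0] fun z => f z * w z := by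
  have hden : ∀ᶠ z in 𝓝 0, 1 - α * w z ^ 2 ≠ 0 :=
    (continuousAt_const.sub (continuousAt_const.mul (hw.pow 2))).eventually_ne (by simp [hw0])
  refine eventuallyEq_nhds_of_eventuallyEq_nhdsNE ?_ (by simp [hf0, hw0])
  filter_upwards [h, hf.eventually_ne one_ne_zero, nhdsWithin_le_nhds hden] with z hz hfz hdz
  rw [div_sub_one hfz, div_eq_div_iff hfz hdz] at hz
  linear_combination hz

lemma norm_sq_one_sub_conj_mul_sub_norm_sq_sub (a u : ℂ) :
    ‖1 - conj a * u‖ ^ 2 - ‖u - a‖ ^ 2 = (1 - ‖a‖ ^ 2) * (1 - ‖u‖ ^ 2) := by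
  simp only [← Complex.normSq_eq_norm_sq, normSq_apply]
  simp only [sub_re, one_re, mul_re, conj_re, conj_im, sub_im, one_im, mul_im]
  ring

lemma norm_div_one_sub_conj_mul_lt_one {a u : ℂ} (ha : ‖a‖ < 1) (hu : ‖u‖ < 1) :
    ‖(u - a) / (1 - conj a * u)‖ < 1 := by
  have hpos : 0 < (1 - ‖a‖ ^ 2) * (1 - ‖u‖ ^ 2) := by
    have := norm_nonneg a; have := norm_nonneg u
    apply mul_pos <;> nlinarith
  have hlt : ‖u - a‖ ^ 2 < ‖1 - conj a * u‖ ^ 2 := by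
    linarith [norm_sq_one_sub_conj_mul_sub_norm_sq_sub a u]
  rw [norm_div, div_lt_one (by nlinarith [norm_nonneg (u - a), norm_nonneg (1 - conj a * u)])]
  exact (pow_lt_pow_iff_left₀ (norm_nonneg _) (norm_nonneg _) two_ne_zero).mp hlt

/-- The Schwarz lemma applied to `(φ - a) / (1 - conj a * φ)` with `a = φ 0`. -/
lemma norm_deriv_le_one_sub_sq_norm_of_mapsTo_ball {φ : ℂ → ℂ}
    (hd : DifferentiableOn ℂ φ (ball 0 1)) (hφ : MapsTo φ (ball 0 1) (ball 0 1)) :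
    ‖deriv φ 0‖ ≤ 1 - ‖φ 0‖ ^ 2 := by
  set a := φ 0 with ha_def
  have ha : ‖a‖ < 1 := mem_ball_zero_iff.mp (hφ (mem_ball_self one_pos))
  have hden : ∀ z ∈ ball (0 : ℂ) 1, 1 - conj a * φ z ≠ 0 := fun z hz h => by
    have : ‖conj a * φ z‖ < 1 := by
      rw [norm_mul, RCLike.norm_conj]
      exact mul_lt_one_of_nonneg_of_lt_one_left (norm_nonneg _) ha
        (mem_ball_zero_iff.mp (hφ hz)).le
    rw [← sub_eq_zero.mp h, norm_one] at this
    exact this.false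
  set ψ := fun z => (φ z - a) / (1 - conj a * φ z)
  have hψd : DifferentiableOn ℂ ψ (ball 0 1) :=
    (hd.sub_const a).div ((differentiableOn_const 1).sub (hd.const_mul _)) hden
  have hψ : MapsTo ψ (ball 0 1) (closedBall (ψ 0) 1) := fun z hz => by
    simpa [ψ, a] using (norm_div_one_sub_conj_mul_lt_one ha (mem_ball_zero_iff.mp (hφ hz))).le
  have hφ0 : HasDerivAt φ (deriv φ 0) 0 :=
    (hd.differentiableAt (ball_mem_nhds 0 one_pos)).hasDerivAt
  have hψ' : deriv ψ 0 = deriv φ 0 / (1 - conj a * a) := by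
    have h : HasDerivAt ψ _ 0 := (hφ0.sub_const a).fun_div
      ((hφ0.const_mul (conj a)).const_sub 1) (hden 0 (mem_ball_self one_pos))
    rw [h.deriv, ← ha_def, sub_self, zero_mul, sub_zero, sq,
      mul_div_mul_right _ _ (hden 0 (mem_ball_self one_pos))]
  have hconj : 1 - conj a * a = ((1 - ‖a‖ ^ 2 : ℝ) : ℂ) := by
    rw [mul_comm, mul_conj, normSq_eq_norm_sq]; push_cast; ring
  have hpos : 0 < 1 - ‖a‖ ^ 2 := by nlinarith [norm_nonneg a]
  have hschwarz := norm_deriv_le_one_of_mapsTo_ball hψd hψ one_pos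
  rwa [hψ', hconj, norm_div, norm_real, Real.norm_of_nonneg hpos.le, div_le_one hpos] at hschwarz

lemma norm_deriv_le_one_sub_sq_norm {φ : ℂ → ℂ}
    (hd : DifferentiableOn ℂ φ (ball 0 1)) (hφ : MapsTo φ (ball 0 1) (closedBall 0 1)) :
    ‖deriv φ 0‖ ≤ 1 - ‖φ 0‖ ^ 2 := by
  by_cases h : MapsTo φ (ball 0 1) (ball 0 1)
  · exact norm_deriv_le_one_sub_sq_norm_of_mapsTo_ball hd h
  obtain ⟨z₀, hz₀, hnorm⟩ : ∃ z₀ ∈ ball (0 : ℂ) 1, 1 ≤ ‖φ z₀‖ := by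
    simpa [MapsTo] using h
  have hmax : IsMaxOn (norm ∘ φ) (ball 0 1) z₀ := fun z hz =>
    (mem_closedBall_zero_iff.mp (hφ hz)).trans hnorm
  have hconst := eqOn_of_isPreconnected_of_isMaxOn_norm (convex_ball (0 : ℂ) 1).isPreconnected
    isOpen_ball hd hz₀ hmax
  have hnorm_eq : ‖φ 0‖ = 1 := by
    rw [hconst (mem_ball_self one_pos)]
    exact le_antisymm (mem_closedBall_zero_iff.mp (hφ hz₀)) hnorm
  have hloc : φ =ᶠ[𝓝 0] fun _ => φ z₀ := eventually_of_mem (ball_mem_nhds 0 one_pos) hconst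
  simp [hloc.deriv_eq, hnorm_eq]

lemma norm_iteratedDeriv_two_div_two_le {w : ℂ → ℂ} (hd : DifferentiableOn ℂ w (ball 0 1))
    (hw : MapsTo w (ball 0 1) (ball 0 1)) (hw0 : w 0 = 0) :
    ‖iteratedDeriv 2 w 0 / 2‖ ≤ 1 - ‖deriv w 0‖ ^ 2 := by
  have hdslope : DifferentiableOn ℂ (dslope w 0) (ball 0 1) :=
    (differentiableOn_dslope (ball_mem_nhds 0 one_pos)).mpr hd
  have hw_eq : w = fun z => z * dslope w 0 z := funext fun z => by
    simpa [hw0] using (sub_smul_dslope w 0 z).symm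
  have h2 : iteratedDeriv 2 w 0 / 2 = deriv (dslope w 0) 0 := by
    conv_lhs => rw [hw_eq, iteratedDeriv_succ_id_mul_zero
      ((hdslope.analyticAt (ball_mem_nhds 0 one_pos)).contDiffAt)]
    rw [iteratedDeriv_one]
    ring
  rw [h2, ← dslope_same w 0]
  refine norm_deriv_le_one_sub_sq_norm hdslope fun z hz => ?_
  rw [mem_closedBall_zero_iff]
  simpa [hw0] using norm_dslope_le_div_of_mapsTo_ball hd
    (by simpa [hw0] using hw.mono_right ball_subset_closedBall) hz

lemma norm_sub_mul_sq_le_max {c₁ c₂ : ℂ} (h : ‖c₂‖ ≤ 1 - ‖c₁‖ ^ 2) (ν : ℂ) :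
    ‖c₂ - ν * c₁ ^ 2‖ ≤ max 1 ‖ν‖ :=
  calc ‖c₂ - ν * c₁ ^ 2‖ ≤ (1 - ‖c₁‖ ^ 2) + ‖ν‖ * ‖c₁‖ ^ 2 := by
        grw [norm_sub_le, h, norm_mul, norm_pow]
    _ ≤ max 1 ‖ν‖ := by
        have h1 : 0 ≤ 1 - ‖c₁‖ ^ 2 := (norm_nonneg _).trans h
        linarith [mul_nonneg h1 (sub_nonneg.2 (le_max_left 1 ‖ν‖)),
          mul_nonneg (sq_nonneg ‖c₁‖) (sub_nonneg.2 (le_max_right 1 ‖ν‖))]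

theorem fekete_szego_BS_general (α : ℝ)
    (f : ℂ → ℂ) (hf : DifferentiableOn ℂ f (ball (0:ℂ) 1))
    (hf0 : f 0 = 0) (hf'0 : deriv f 0 = 1)
    (hsub : ∃ w : ℂ → ℂ, DifferentiableOn ℂ w (ball (0:ℂ) 1) ∧ w 0 = 0 ∧
      (∀ z ∈ ball (0:ℂ) 1, w z ∈ ball (0:ℂ) 1) ∧
      ∀ z ∈ ball (0:ℂ) 1, z ≠ 0 →
        z * deriv f z / f z - 1 = w z / (1 - (α : ℂ) * (w z) ^ 2))
    (μ : ℂ) :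
    ‖iteratedDeriv 3 f 0 / 6 - μ * (iteratedDeriv 2 f 0 / 2) ^ 2‖ ≤
      (1 / 2) * max 1 ‖2 * μ - 1‖ := by
  obtain ⟨w, hwd, hw0, hwm, hsub⟩ := hsub
  have hball : ball (0 : ℂ) 1 ∈ 𝓝 0 := ball_mem_nhds 0 one_pos
  have hfa : AnalyticAt ℂ f 0 := hf.analyticAt hball
  have hwa : AnalyticAt ℂ w 0 := hwd.analyticAt hball
  have heq := eventuallyEq_cross_mul_of_eq_div (α := α)
    (hf'0 ▸ hfa.differentiableAt.hasDerivAt) hf0 hwa.continuousAt hw0 <| by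
      filter_upwards [self_mem_nhdsWithin, nhdsWithin_le_nhds hball] with z hz0 hz
      exact hsub z hz hz0
  obtain ⟨ha₂, ha₃⟩ := iteratedDeriv_two_three_zero_of_eventuallyEq hfa hwa (by fun_prop) hf0 hf'0
    hw0 (by simp [hw0]) (by simp [hw0, hwa.differentiableAt]) heq
  rw [ha₂, ha₃]
  calc _ = ‖(iteratedDeriv 2 w 0 / 2 - (2 * μ - 1) * deriv w 0 ^ 2) / 2‖ := by ring_nf
    _ = ‖iteratedDeriv 2 w 0 / 2 - (2 * μ - 1) * deriv w 0 ^ 2‖ / 2 := by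
        rw [norm_div, Complex.norm_two]
    _ ≤ max 1 ‖2 * μ - 1‖ / 2 := by
        gcongr
        exact norm_sub_mul_sq_le_max (norm_iteratedDeriv_two_div_two_le hwd hwm hw0) _
    _ = _ := by ring

theorem fekete_szego_BS (α : ℝ) (hα0 : 0 ≤ α) (hα1 : α < 1)
    (f : ℂ → ℂ) (hf : DifferentiableOn ℂ f (ball (0:ℂ) 1))
    (hf0 : f 0 = 0) (hf'0 : deriv f 0 = 1)
    (hfne : ∀ z ∈ ball (0:ℂ) 1, z ≠ 0 → f z ≠ 0)
    (hsub : ∃ w : ℂ → ℂ, DifferentiableOn ℂ w (ball (0:ℂ) 1) ∧ w 0 = 0 ∧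
      (∀ z ∈ ball (0:ℂ) 1, w z ∈ ball (0:ℂ) 1) ∧
      ∀ z ∈ ball (0:ℂ) 1, z ≠ 0 →
        z * deriv f z / f z - 1 = w z / (1 - (α : ℂ) * (w z) ^ 2))
    (μ : ℂ) :
    ‖iteratedDeriv 3 f 0 / 6 - μ * (iteratedDeriv 2 f 0 / 2) ^ 2‖ ≤
      (1 / 2) * max 1 ‖2 * μ - 1‖ :=
  fekete_szego_BS_general α f hf hf0 hf'0 hsub μ
end

section
/- If f ∈ BS(α) with 0 ≤ α < 1 and inverse function f^{-1}(w) = w + b_2 w² + b_3 w³ + ⋯ near 0, then |b_2| ≤ 1 and |b_3| ≤ 3/2. -/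
open Filter Topology Metric Set ComplexConjugate

/-!
Write `w = c₁ z + c₂ z² + ⋯` for the Schwarz function. Clearing denominators, the subordination
becomes `(z f' - f)(1 - α w²) = w f`, and since `1 - α w² = 1 + O(z²)`, comparing Taylor
coefficients up to order 3 gives `a₂ = c₁` and `2 a₃ = c₂ + c₁²`. Differentiating `g ∘ f = id`
gives `b₂ = -a₂` and `b₃ = 2 a₂² - a₃ = -(c₂ - 3 c₁²) / 2`. The Schwarz–Pick bound
`|c₂| ≤ 1 - |c₁|²` then yields `|b₂| ≤ 1` and `|c₂ - 3 c₁²| ≤ 1 + 2 |c₁|² ≤ 3`.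
-/

section AnalyticCalculus

variable {𝕜 : Type*} [NontriviallyNormedField 𝕜] {f g : 𝕜 → 𝕜} {x : 𝕜}

theorem deriv_eq_one_of_comp_eventuallyEq_id (hg : DifferentiableAt 𝕜 g (f x))
    (hf : DifferentiableAt 𝕜 f x) (hf' : deriv f x = 1) (hgf : g ∘ f =ᶠ[𝓝 x] id) :
    deriv g (f x) = 1 := by
  simpa [deriv_comp x hg hf, hf'] using hgf.deriv_eq

variable [CompleteSpace 𝕜]

theorem AnalyticAt.deriv_comp_eventuallyEq (hg : AnalyticAt 𝕜 g (f x)) (hf : AnalyticAt 𝕜 f x) :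
    deriv (g ∘ f) =ᶠ[𝓝 x] fun z ↦ deriv g (f z) * deriv f z := by
  filter_upwards [hf.eventually_analyticAt, hf.continuousAt.eventually hg.eventually_analyticAt]
    with z hfz hgz
  exact deriv_comp z hgz.differentiableAt hfz.differentiableAt

/-- Leibniz's rule applied to `(g ∘ f)' = (g' ∘ f) * f'`. -/
theorem AnalyticAt.iteratedDeriv_succ_comp (hg : AnalyticAt 𝕜 g (f x)) (hf : AnalyticAt 𝕜 f x)
    (n : ℕ) : iteratedDeriv (n + 1) (g ∘ f) x = ∑ i ∈ Finset.range (n + 1),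
      n.choose i * iteratedDeriv i (deriv g ∘ f) x * iteratedDeriv (n - i + 1) f x := by
  rw [iteratedDeriv_succ', (hg.deriv_comp_eventuallyEq hf).iteratedDeriv_eq,
    iteratedDeriv_fun_mul (hg.deriv.fun_comp hf).contDiffAt hf.deriv.contDiffAt]
  simp only [iteratedDeriv_succ', Function.comp_def]

theorem AnalyticAt.iteratedDeriv_two_comp (hg : AnalyticAt 𝕜 g (f x)) (hf : AnalyticAt 𝕜 f x) :
    iteratedDeriv 2 (g ∘ f) x =
      iteratedDeriv 2 g (f x) * deriv f x ^ 2 + deriv g (f x) * iteratedDeriv 2 f x := by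
  rw [hg.iteratedDeriv_succ_comp hf]
  simp [Finset.sum_range_succ, deriv_comp x hg.deriv.differentiableAt hf.differentiableAt,
    iteratedDeriv_succ]
  ring

theorem AnalyticAt.iteratedDeriv_three_comp (hg : AnalyticAt 𝕜 g (f x)) (hf : AnalyticAt 𝕜 f x) :
    iteratedDeriv 3 (g ∘ f) x =
      iteratedDeriv 3 g (f x) * deriv f x ^ 3
        + 3 * iteratedDeriv 2 g (f x) * deriv f x * iteratedDeriv 2 f x
        + deriv g (f x) * iteratedDeriv 3 f x := by
  rw [hg.iteratedDeriv_succ_comp hf]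
  simp [Finset.sum_range_succ, hg.deriv.iteratedDeriv_two_comp hf,
    deriv_comp x hg.deriv.differentiableAt hf.differentiableAt, iteratedDeriv_succ]
  ring

theorem iteratedDeriv_two_eq_neg_of_comp_eventuallyEq_id (hg : AnalyticAt 𝕜 g (f x))
    (hf : AnalyticAt 𝕜 f x) (hf' : deriv f x = 1) (hgf : g ∘ f =ᶠ[𝓝 x] id) :
    iteratedDeriv 2 g (f x) = -iteratedDeriv 2 f x := by
  have h := hgf.iteratedDeriv_eq 2
  rw [hg.iteratedDeriv_two_comp hf, deriv_eq_one_of_comp_eventuallyEq_id hg.differentiableAt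
    hf.differentiableAt hf' hgf, hf', iteratedDeriv_id] at h
  simpa [add_eq_zero_iff_eq_neg] using h

theorem iteratedDeriv_three_eq_of_comp_eventuallyEq_id (hg : AnalyticAt 𝕜 g (f x))
    (hf : AnalyticAt 𝕜 f x) (hf' : deriv f x = 1) (hgf : g ∘ f =ᶠ[𝓝 x] id) :
    iteratedDeriv 3 g (f x) = 3 * iteratedDeriv 2 f x ^ 2 - iteratedDeriv 3 f x := by
  have h := hgf.iteratedDeriv_eq 3
  rw [hg.iteratedDeriv_three_comp hf, deriv_eq_one_of_comp_eventuallyEq_id hg.differentiableAt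
    hf.differentiableAt hf' hgf, hf',
    iteratedDeriv_two_eq_neg_of_comp_eventuallyEq_id hg hf hf' hgf, iteratedDeriv_id] at h
  norm_num at h
  linear_combination h

theorem iteratedDeriv_mul_deriv_sub_self_zero (hf : AnalyticAt 𝕜 f 0) (n : ℕ) :
    iteratedDeriv n (fun z ↦ z * deriv f z - f z) 0 = (n - 1) * iteratedDeriv n f 0 := by
  rw [iteratedDeriv_fun_sub (f := fun z ↦ z * deriv f z) (analyticAt_id.mul hf.deriv).contDiffAt
      hf.contDiffAt, iteratedDeriv_fun_mul (f := fun z ↦ z) analyticAt_id.contDiffAt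
      hf.deriv.contDiffAt]
  rcases n with _ | n
  · simp
  · rw [Finset.sum_eq_single 1]
    · simp [iteratedDeriv_fun_id_zero, ← iteratedDeriv_succ']
      ring
    · intro i _ hi
      simp [iteratedDeriv_fun_id_zero, hi]
    · simp

variable {w E : 𝕜 → 𝕜}

theorem iteratedDeriv_two_eq_of_mul_eventuallyEq (hf : AnalyticAt 𝕜 f 0) (hw : AnalyticAt 𝕜 w 0)
    (hE : AnalyticAt 𝕜 E 0) (hf0 : f 0 = 0) (hf' : deriv f 0 = 1) (hw0 : w 0 = 0)
    (hE0 : E 0 = 1) (hE' : deriv E 0 = 0)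
    (h : (fun z ↦ (z * deriv f z - f z) * E z) =ᶠ[𝓝 0] fun z ↦ w z * f z) :
    iteratedDeriv 2 f 0 = 2 * deriv w 0 := by
  have h2 := h.iteratedDeriv_eq 2
  rw [iteratedDeriv_fun_mul (f := fun z ↦ z * deriv f z - f z)
      ((analyticAt_id.mul hf.deriv).sub hf).contDiffAt hE.contDiffAt,
    iteratedDeriv_fun_mul hw.contDiffAt hf.contDiffAt] at h2
  simp [Finset.sum_range_succ, iteratedDeriv_mul_deriv_sub_self_zero hf, hf0, hf', hw0, hE0,
    hE'] at h2
  linear_combination h2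

theorem iteratedDeriv_three_eq_of_mul_eventuallyEq (hf : AnalyticAt 𝕜 f 0)
    (hw : AnalyticAt 𝕜 w 0) (hE : AnalyticAt 𝕜 E 0) (hf0 : f 0 = 0) (hf' : deriv f 0 = 1)
    (hw0 : w 0 = 0) (hE0 : E 0 = 1) (hE' : deriv E 0 = 0)
    (h : (fun z ↦ (z * deriv f z - f z) * E z) =ᶠ[𝓝 0] fun z ↦ w z * f z) :
    2 * iteratedDeriv 3 f 0 = 3 * iteratedDeriv 2 w 0 + 3 * deriv w 0 * iteratedDeriv 2 f 0 := by
  have h3 := h.iteratedDeriv_eq 3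
  rw [iteratedDeriv_fun_mul (f := fun z ↦ z * deriv f z - f z)
      ((analyticAt_id.mul hf.deriv).sub hf).contDiffAt hE.contDiffAt,
    iteratedDeriv_fun_mul hw.contDiffAt hf.contDiffAt] at h3
  simp [Finset.sum_range_succ, iteratedDeriv_mul_deriv_sub_self_zero hf, hf0, hf', hw0, hE0,
    hE'] at h3
  linear_combination h3

end AnalyticCalculus

theorem mul_deriv_sub_mul_eventuallyEq_of_subordination {𝕜 : Type*} [NontriviallyNormedField 𝕜]
    {α : 𝕜} {f w : 𝕜 → 𝕜} (hw : ContinuousAt w 0) (hw0 : w 0 = 0) (hf0 : f 0 = 0)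
    (hfne : ∀ᶠ z in 𝓝 0, z ≠ 0 → f z ≠ 0)
    (h : ∀ᶠ z in 𝓝 0, z ≠ 0 → z * deriv f z / f z - 1 = w z / (1 - α * w z ^ 2)) :
    (fun z ↦ (z * deriv f z - f z) * (1 - α * w z ^ 2)) =ᶠ[𝓝 0] fun z ↦ w z * f z := by
  have hE : ∀ᶠ z in 𝓝 0, 1 - α * w z ^ 2 ≠ 0 :=
    (continuousAt_const.sub (continuousAt_const.mul (hw.pow 2))).eventually_ne (by simp [hw0])
  filter_upwards [hfne, h, hE] with z hfz hsub hEz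
  rcases eq_or_ne z 0 with rfl | hz0
  · simp [hf0, hw0]
  · rw [div_sub_one (hfz hz0), div_eq_div_iff (hfz hz0) hEz] at hsub
    exact hsub hz0

theorem Complex.norm_sub_le_norm_one_sub_conj_mul {a t : ℂ} (ha : ‖a‖ ≤ 1) (ht : ‖t‖ ≤ 1) :
    ‖t - a‖ ≤ ‖1 - conj a * t‖ := by
  have key : ‖1 - conj a * t‖ ^ 2 - ‖t - a‖ ^ 2 = (1 - ‖a‖ ^ 2) * (1 - ‖t‖ ^ 2) := by
    simp only [← normSq_eq_norm_sq, normSq_apply, sub_re, sub_im, mul_re, mul_im, conj_re,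
      conj_im, one_re, one_im]
    ring
  have : 0 ≤ (1 - ‖a‖ ^ 2) * (1 - ‖t‖ ^ 2) := by
    apply mul_nonneg <;> nlinarith [norm_nonneg a, norm_nonneg t]
  exact (pow_le_pow_iff_left₀ (norm_nonneg _) (norm_nonneg _) two_ne_zero).1 (by linarith)

theorem Complex.norm_deriv_le_one_sub_sq_of_mapsTo_ball {h : ℂ → ℂ}
    (hd : DifferentiableOn ℂ h (ball 0 1)) (hmaps : MapsTo h (ball 0 1) (closedBall 0 1)) :
    ‖deriv h 0‖ ≤ 1 - ‖h 0‖ ^ 2 := by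
  have h0 : (0 : ℂ) ∈ ball (0 : ℂ) 1 := mem_ball_self one_pos
  have hball : ∀ z ∈ ball (0 : ℂ) 1, ‖h z‖ ≤ 1 := fun z hz ↦ by simpa using hmaps hz
  set a := h 0
  rcases (hball 0 h0).eq_or_lt with ha | ha
  · -- maximum modulus: `h` is constant
    have hconst : EqOn h (fun _ ↦ a) (ball 0 1) :=
      Complex.eqOn_of_isPreconnected_of_isMaxOn_norm (convex_ball 0 1).isPreconnected
        isOpen_ball hd h0 fun z hz ↦ by simpa [ha] using hball z hz
    rw [(eventuallyEq_of_mem (ball_mem_nhds 0 one_pos) hconst).deriv_eq, ha]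
    simp
  · -- Schwarz's lemma for `h` followed by the disc automorphism sending `a` to `0`
    have hden : ∀ z ∈ ball (0 : ℂ) 1, 1 - conj a * h z ≠ 0 := fun z hz ↦ by
      refine sub_ne_zero.2 fun heq ↦ ?_
      have : ‖conj a * h z‖ < 1 := by
        rw [norm_mul, RCLike.norm_conj]
        exact (mul_le_of_le_one_right (norm_nonneg a) (hball z hz)).trans_lt ha
      simp [← heq] at this
    set ψ : ℂ → ℂ := fun z ↦ (h z - a) / (1 - conj a * h z)
    have hψd : DifferentiableOn ℂ ψ (ball 0 1) :=
      (hd.sub_const a).div ((hd.const_mul _).const_sub 1) hden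
    have hψ0 : ψ 0 = 0 := by simp [ψ, a]
    have hψmaps : MapsTo ψ (ball 0 1) (closedBall (ψ 0) 1) := fun z hz ↦ by
      rw [hψ0, mem_closedBall_zero_iff, norm_div, div_le_one (norm_pos_iff.2 (hden z hz))]
      exact Complex.norm_sub_le_norm_one_sub_conj_mul (hball 0 h0) (hball z hz)
    have hconj : 1 - conj a * a = ((1 - ‖a‖ ^ 2 : ℝ) : ℂ) := by
      rw [Complex.conj_mul']; push_cast; ring
    have hψ' : deriv ψ 0 = deriv h 0 / ((1 - ‖a‖ ^ 2 : ℝ) : ℂ) := by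
      have hh := (hd.differentiableAt (ball_mem_nhds 0 one_pos)).hasDerivAt
      have := ((hh.sub_const a).fun_div ((hh.const_mul (conj a)).const_sub 1) (hden 0 h0)).deriv
      have hden0 := hden 0 h0
      rw [this, show h 0 = a from rfl, sub_self, zero_mul, sub_zero, ← hconj]
      field_simp
    have hpos : 0 < 1 - ‖a‖ ^ 2 := by nlinarith [norm_nonneg a]
    have := Complex.norm_deriv_le_one_of_mapsTo_ball hψd hψmaps one_pos
    rwa [hψ', norm_div, Complex.norm_real, Real.norm_of_nonneg hpos.le, div_le_one hpos] at this

theorem Complex.norm_iteratedDeriv_two_div_two_le_of_mapsTo_ball {w : ℂ → ℂ}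
    (hd : DifferentiableOn ℂ w (ball 0 1)) (hw0 : w 0 = 0)
    (hmaps : MapsTo w (ball 0 1) (closedBall 0 1)) :
    ‖iteratedDeriv 2 w 0 / 2‖ ≤ 1 - ‖deriv w 0‖ ^ 2 := by
  have hball := ball_mem_nhds (0 : ℂ) one_pos
  set v := dslope w 0
  have hvd : DifferentiableOn ℂ v (ball 0 1) := (differentiableOn_dslope hball).2 hd
  have hvmaps : MapsTo v (ball 0 1) (closedBall 0 1) := fun z hz ↦ by
    simpa using Complex.norm_dslope_le_div_of_mapsTo_ball hd (by rwa [hw0]) hz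
  have hwv : w = fun z ↦ z * v z := funext fun z ↦ by
    simpa [hw0] using (sub_smul_dslope w 0 z).symm
  have hw2 : iteratedDeriv 2 w 0 = 2 * deriv v 0 := by
    rw [hwv, iteratedDeriv_fun_mul (f := fun z ↦ z) contDiffAt_id
      ((hvd.analyticAt hball).contDiffAt)]
    simp [iteratedDeriv_fun_id_zero]
  rw [hw2, mul_div_cancel_left₀ _ two_ne_zero, ← dslope_same w 0]
  exact Complex.norm_deriv_le_one_sub_sq_of_mapsTo_ball hvd hvmaps

theorem norm_add_mul_sq_le_max {R : Type*} [SeminormedRing R] {c₁ c₂ : R} (t : R)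
    (h : ‖c₂‖ ≤ 1 - ‖c₁‖ ^ 2) : ‖c₂ + t * c₁ ^ 2‖ ≤ max 1 ‖t‖ := by
  have hs : ‖c₁‖ ^ 2 ≤ 1 := by linarith [norm_nonneg c₂]
  have hmul : ‖t * c₁ ^ 2‖ ≤ ‖t‖ * ‖c₁‖ ^ 2 :=
    (norm_mul_le _ _).trans (by gcongr; exact norm_pow_le' c₁ two_pos)
  calc ‖c₂ + t * c₁ ^ 2‖ ≤ (1 - ‖c₁‖ ^ 2) * 1 + ‖c₁‖ ^ 2 * ‖t‖ := by
        linarith [norm_add_le c₂ (t * c₁ ^ 2)]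
    _ ≤ (1 - ‖c₁‖ ^ 2) * max 1 ‖t‖ + ‖c₁‖ ^ 2 * max 1 ‖t‖ := by
        nlinarith [le_max_left 1 ‖t‖, le_max_right 1 ‖t‖]
    _ = max 1 ‖t‖ := by ring

theorem inverse_coeff_bounds_BS_general (α : ℝ)
    (f : ℂ → ℂ) (hf : DifferentiableOn ℂ f (ball (0:ℂ) 1))
    (hf0 : f 0 = 0) (hf'0 : deriv f 0 = 1)
    (hfne : ∀ z ∈ ball (0:ℂ) 1, z ≠ 0 → f z ≠ 0)
    (hsub : ∃ w : ℂ → ℂ, DifferentiableOn ℂ w (ball (0:ℂ) 1) ∧ w 0 = 0 ∧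
      (∀ z ∈ ball (0:ℂ) 1, w z ∈ ball (0:ℂ) 1) ∧
      ∀ z ∈ ball (0:ℂ) 1, z ≠ 0 →
        z * deriv f z / f z - 1 = w z / (1 - (α : ℂ) * (w z) ^ 2))
    (g : ℂ → ℂ) (hg : AnalyticAt ℂ g 0)
    (hinv : ∀ᶠ z in nhds (0:ℂ), g (f z) = z) :
    ‖iteratedDeriv 2 g 0 / 2‖ ≤ 1 ∧ ‖iteratedDeriv 3 g 0 / 6‖ ≤ 3 / 2 := by
  obtain ⟨w, hw, hw0, hwmaps, hsubord⟩ := hsub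
  have hball : ball (0 : ℂ) 1 ∈ 𝓝 0 := ball_mem_nhds 0 one_pos
  have hfA : AnalyticAt ℂ f 0 := hf.analyticAt hball
  have hwA : AnalyticAt ℂ w 0 := hw.analyticAt hball
  have hgA : AnalyticAt ℂ g (f 0) := by rwa [hf0]
  have hEA : AnalyticAt ℂ (fun z ↦ 1 - (α : ℂ) * w z ^ 2) 0 :=
    analyticAt_const.sub (analyticAt_const.mul (hwA.pow 2))
  have hE' : deriv (fun z ↦ 1 - (α : ℂ) * w z ^ 2) 0 = 0 := by
    simp [hw0, hwA.differentiableAt]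
  have hprod := mul_deriv_sub_mul_eventuallyEq_of_subordination hwA.continuousAt hw0 hf0
    (eventually_of_mem hball hfne) (eventually_of_mem hball hsubord)
  have hf2 := iteratedDeriv_two_eq_of_mul_eventuallyEq hfA hwA hEA hf0 hf'0 hw0 (by simp [hw0])
    hE' hprod
  have hf3 := iteratedDeriv_three_eq_of_mul_eventuallyEq hfA hwA hEA hf0 hf'0 hw0 (by simp [hw0])
    hE' hprod
  have hg2 := iteratedDeriv_two_eq_neg_of_comp_eventuallyEq_id hgA hfA hf'0 hinv
  have hg3 := iteratedDeriv_three_eq_of_comp_eventuallyEq_id hgA hfA hf'0 hinv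
  rw [hf0] at hg2 hg3
  have hc2 := Complex.norm_iteratedDeriv_two_div_two_le_of_mapsTo_ball hw hw0
    fun z hz ↦ ball_subset_closedBall (hwmaps z hz)
  constructor
  · rw [hg2, hf2, neg_div, mul_div_cancel_left₀ _ two_ne_zero, norm_neg]
    nlinarith [norm_nonneg (iteratedDeriv 2 w 0 / 2), norm_nonneg (deriv w 0)]
  · have hb3 : iteratedDeriv 3 g 0 / 6 =
        -(iteratedDeriv 2 w 0 / 2 + (-3) * deriv w 0 ^ 2) / 2 := by
      rw [hf2] at hf3
      rw [hg3, hf2]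
      linear_combination (-1 / 12) * hf3
    rw [hb3, norm_div, norm_neg]
    have := norm_add_mul_sq_le_max (-3) hc2
    norm_num at this ⊢
    linarith

theorem inverse_coeff_bounds_BS (α : ℝ) (hα0 : 0 ≤ α) (hα1 : α < 1)
    (f : ℂ → ℂ) (hf : DifferentiableOn ℂ f (ball (0:ℂ) 1))
    (hf0 : f 0 = 0) (hf'0 : deriv f 0 = 1)
    (hfne : ∀ z ∈ ball (0:ℂ) 1, z ≠ 0 → f z ≠ 0)
    (hsub : ∃ w : ℂ → ℂ, DifferentiableOn ℂ w (ball (0:ℂ) 1) ∧ w 0 = 0 ∧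
      (∀ z ∈ ball (0:ℂ) 1, w z ∈ ball (0:ℂ) 1) ∧
      ∀ z ∈ ball (0:ℂ) 1, z ≠ 0 →
        z * deriv f z / f z - 1 = w z / (1 - (α : ℂ) * (w z) ^ 2))
    (g : ℂ → ℂ) (hg : AnalyticAt ℂ g 0) (hg0 : g 0 = 0)
    (hinv : ∀ᶠ z in nhds (0:ℂ), g (f z) = z) :
    ‖iteratedDeriv 2 g 0 / 2‖ ≤ 1 ∧ ‖iteratedDeriv 3 g 0 / 6‖ ≤ 3 / 2 :=
  inverse_coeff_bounds_BS_general α f hf hf0 hf'0 hfne hsub g hg hinv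
end
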